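/- Fix t ≥ 1 and let H_t = {s ∈ ℤ : 0 ≤ s < p_t, 2^t | s, and b_i ∤ s for all 1 ≤ i ≤ t} (the set of holes at level t). If m ∈ ℤ is such that {(s + m) mod p_t : s ∈ H_t} = H_t, then p_t | m. -/

import Mathlib

open scoped BigOperators

-- `pp b t = 2^t * b_1 * b_2 * \cdots * b_t`. 
def pp (b : ℕ → ℕ) (t : ℕ) : ℕ := 2 ^ t * ∏ i ∈ Finset.Icc 1 t, b i

-- The set of holes at level `t`. 
def Hset (b : ℕ → ℕ) (t : ℕ) : Set ℤ :=
  {s : ℤ | 0 ≤ s ∧ s < (pp b t : ℤ) ∧ (2 : ℤ) ^ t ∣ s ∧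
    ∀ i : ℕ, 1 ≤ i → i ≤ t → ¬ ((b i : ℤ) ∣ s)}

/-!
A hole is determined by its residues modulo `2^t, b_1, …, b_t`, which are pairwise coprime,
so by the Chinese remainder theorem holes can be found in any prescribed nonzero residue
classes modulo the `b_i`. Shifting an arbitrary hole by `m` gives `2^t ∣ m`. If `b_i ∤ m`,
choose a hole `s ≡ -m (mod b_i)`: then `b_i ∣ s + m`, so the shift of `s` is not a hole.
-/

open Function

theorem exists_forall_dvd_sub_of_pairwise_isCoprime {R ι : Type*} [CommRing R] [Finite ι]
    {f : ι → R} (hf : Pairwise (IsCoprime on f)) (x : ι → R) :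
    ∃ r, ∀ i, f i ∣ r - x i := by
  obtain ⟨r, hr⟩ := Ideal.exists_forall_sub_mem_ideal (I := fun i => Ideal.span {f i})
    (fun i j hij => (Ideal.isCoprime_span_singleton_iff _ _).2 (hf hij)) x
  exact ⟨r, fun i => Ideal.mem_span_singleton.1 (hr i)⟩

theorem Odd.isCoprime_two_pow {n : ℕ} (hn : Odd n) (t : ℕ) : IsCoprime ((2 : ℤ) ^ t) n := by
  simpa using Nat.isCoprime_iff_coprime.2 ((Nat.coprime_two_left.2 hn).pow_left t)

section Holes

variable {b : ℕ → ℕ} {t : ℕ}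

/-- The residue condition defining a hole; `Hset b t` consists of its solutions in
`[0, pp b t)`. -/
def IsHole (b : ℕ → ℕ) (t : ℕ) (x : ℤ) : Prop :=
  (2 : ℤ) ^ t ∣ x ∧ ∀ i : ℕ, 1 ≤ i → i ≤ t → ¬ ((b i : ℤ) ∣ x)

theorem natCast_pp (b : ℕ → ℕ) (t : ℕ) :
    (pp b t : ℤ) = 2 ^ t * ∏ i ∈ Finset.Icc 1 t, (b i : ℤ) := by
  simp [pp]

theorem pp_pos (hb : ∀ i ∈ Finset.Icc 1 t, 0 < b i) : 0 < pp b t :=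
  Nat.mul_pos (by positivity) (Finset.prod_pos hb)

theorem two_pow_dvd_pp : (2 : ℤ) ^ t ∣ pp b t :=
  ⟨_, natCast_pp b t⟩

theorem dvd_pp {i : ℕ} (h1 : 1 ≤ i) (h2 : i ≤ t) : (b i : ℤ) ∣ pp b t := by
  rw [natCast_pp]
  exact dvd_mul_of_dvd_right (Finset.dvd_prod_of_mem _ (Finset.mem_Icc.2 ⟨h1, h2⟩)) _

theorem emod_pp_mem_Hset_iff (hP : 0 < pp b t) (x : ℤ) :
    x % pp b t ∈ Hset b t ↔ IsHole b t x := by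
  have hP' : (0 : ℤ) < pp b t := by exact_mod_cast hP
  simp only [Hset, IsHole, Set.mem_ofPred_eq, Int.emod_nonneg x hP'.ne', Int.emod_lt_of_pos x hP',
    true_and, EuclideanDomain.dvd_mod_iff two_pow_dvd_pp]
  refine and_congr_right fun _ => forall_congr' fun i => forall_congr' fun h1 =>
    forall_congr' fun h2 => ?_
  rw [EuclideanDomain.dvd_mod_iff (dvd_pp h1 h2)]

theorem IsHole.add_of_image_subset (hP : 0 < pp b t) {m x : ℤ}
    (hshift : (fun s => (s + m) % (pp b t : ℤ)) '' Hset b t ⊆ Hset b t) (hx : IsHole b t x) :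
    IsHole b t (x + m) := by
  rw [← emod_pp_mem_Hset_iff hP] at hx ⊢
  rw [← Int.emod_add_emod]
  exact hshift ⟨_, hx, rfl⟩

theorem exists_isHole_forall_dvd_sub (hodd : ∀ i : ℕ, 1 ≤ i → Odd (b i))
    (hcop : ∀ i j : ℕ, 1 ≤ i → 1 ≤ j → i ≠ j → Nat.Coprime (b i) (b j))
    (r : ℕ → ℤ) (hr : ∀ i : ℕ, 1 ≤ i → i ≤ t → ¬ ((b i : ℤ) ∣ r i)) :
    ∃ x, IsHole b t x ∧ ∀ i : ℕ, 1 ≤ i → i ≤ t → (b i : ℤ) ∣ x - r i := by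
  let f : Option (Finset.Icc 1 t) → ℤ := fun o => o.elim (2 ^ t) fun i => (b i : ℤ)
  have hf : Pairwise (IsCoprime on f) := by
    rintro (_ | ⟨i, hi⟩) (_ | ⟨j, hj⟩) hij
    · exact absurd rfl hij
    · exact (hodd j (Finset.mem_Icc.1 hj).1).isCoprime_two_pow t
    · exact ((hodd i (Finset.mem_Icc.1 hi).1).isCoprime_two_pow t).symm
    · exact Nat.isCoprime_iff_coprime.2 <| hcop i j (Finset.mem_Icc.1 hi).1
        (Finset.mem_Icc.1 hj).1 fun h => hij (by simp [h])
  obtain ⟨x, hx⟩ := exists_forall_dvd_sub_of_pairwise_isCoprime hf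
    fun o => o.elim 0 fun i => r i
  have hxr : ∀ i : ℕ, 1 ≤ i → i ≤ t → (b i : ℤ) ∣ x - r i := fun i h1 h2 =>
    hx (some ⟨i, Finset.mem_Icc.2 ⟨h1, h2⟩⟩)
  refine ⟨x, ⟨by simpa [f] using hx none, fun i h1 h2 hbx => ?_⟩, hxr⟩
  exact hr i h1 h2 ((dvd_sub_right hbx).1 (hxr i h1 h2))

end Holes

theorem holes_shift_invariant_full_general (b : ℕ → ℕ)
    (hodd : ∀ i : ℕ, 1 ≤ i → Odd (b i))
    (hgt : ∀ i : ℕ, 1 ≤ i → 1 < b i)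
    (hcop : ∀ i j : ℕ, 1 ≤ i → 1 ≤ j → i ≠ j → Nat.Coprime (b i) (b j))
    (t : ℕ) (m : ℤ)
    (hshift : (fun s => (s + m) % (pp b t : ℤ)) '' Hset b t = Hset b t) :
    (pp b t : ℤ) ∣ m := by
  have hP : 0 < pp b t := pp_pos fun i hi => (hgt i (Finset.mem_Icc.1 hi).1).trans' one_pos
  have hstep : ∀ x, IsHole b t x → IsHole b t (x + m) := fun x =>
    IsHole.add_of_image_subset hP hshift.subset
  have hb_not_dvd_one : ∀ i : ℕ, 1 ≤ i → i ≤ t → ¬ ((b i : ℤ) ∣ 1) := fun i h1 _ h =>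
    (hgt i h1).ne' (by exact_mod_cast Int.eq_one_of_dvd_one (by positivity) h)
  obtain ⟨x₀, hx₀, -⟩ := exists_isHole_forall_dvd_sub hodd hcop _ hb_not_dvd_one
  have h2m : (2 : ℤ) ^ t ∣ m := (dvd_add_right hx₀.1).1 (hstep x₀ hx₀).1
  have hbm : ∀ i ∈ Finset.Icc 1 t, (b i : ℤ) ∣ m := by
    intro i hi
    obtain ⟨h1, h2⟩ := Finset.mem_Icc.1 hi
    by_contra hm
    obtain ⟨x, hx, hxr⟩ := exists_isHole_forall_dvd_sub (t := t) hodd hcop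
      (Function.update (fun _ => 1) i (-m)) fun j hj1 hj2 => by
        rcases eq_or_ne j i with rfl | hji
        · simpa using hm
        · simpa [hji] using hb_not_dvd_one j hj1 hj2
    exact (hstep x hx).2 i h1 h2 (by simpa using hxr i h1 h2)
  have hpair : (Finset.Icc 1 t : Set ℕ).Pairwise (IsCoprime on fun i => (b i : ℤ)) :=
    fun i hi j hj hij => Nat.isCoprime_iff_coprime.2 <|
      hcop i j (Finset.mem_Icc.1 hi).1 (Finset.mem_Icc.1 hj).1 hij
  have hcop2 : IsCoprime ((2 : ℤ) ^ t) (∏ i ∈ Finset.Icc 1 t, (b i : ℤ)) :=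
    IsCoprime.prod_right fun i hi => (hodd i (Finset.mem_Icc.1 hi).1).isCoprime_two_pow t
  rw [natCast_pp]
  exact hcop2.mul_dvd h2m (Finset.prod_dvd_of_coprime hpair hbm)

theorem holes_shift_invariant_full (b : ℕ → ℕ)
    (hodd : ∀ i : ℕ, 1 ≤ i → Odd (b i))
    (hgt : ∀ i : ℕ, 1 ≤ i → 1 < b i)
    (hcop : ∀ i j : ℕ, 1 ≤ i → 1 ≤ j → i ≠ j → Nat.Coprime (b i) (b j))
    (t : ℕ) (ht : 1 ≤ t) (m : ℤ)
    (hshift : (fun s => (s + m) % (pp b t : ℤ)) '' Hset b t = Hset b t) :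
    (pp b t : ℤ) ∣ m :=
  holes_shift_invariant_full_general b hodd hgt hcop t m hshift
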